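/- Fix h : ℕ and naturals a, b with a < b ≤ 2^h. For every j with 0 ≤ j ≤ h, there are at most two bitstrings u ∈ CP_h(a, b) with |u| = j. Consequently, the cardinality of CP_h(a, b) is at most 2·(h + 1). -/
import Mathlib

/-- The value of a bitstring (most significant bit first):
`val [] = 0` and `val (u ++ [b]) = 2 * val u + (if b then 1 else 0)`. -/
def bitVal (u : List Bool) : ℕ :=
  u.foldl (fun n b => 2 * n + (if b then 1 else 0)) 0

/-- The segment of a bitstring `u` (with `|u| ≤ h`) in the perfect segment tree of
height `h`: `seg_h(u) = {m : val u · 2^(h−|u|) ≤ m < (val u + 1) · 2^(h−|u|)}`. -/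
def seg (h : ℕ) (u : List Bool) : Set ℕ :=
  {m | bitVal u * 2 ^ (h - u.length) ≤ m ∧ m < (bitVal u + 1) * 2 ^ (h - u.length)}

/-- The canonical partition `CP_h(a, b)` of the interval `{m : a ≤ m < b}` in the
perfect segment tree of height `h`: the bitstrings `u` with `|u| ≤ h` whose segment is
contained in `[a, b)` and such that no proper prefix of `u` has its segment contained
in `[a, b)`. -/
def CP (h a b : ℕ) : Set (List Bool) :=
  {u | u.length ≤ h ∧ seg h u ⊆ Set.Ico a b ∧
    ∀ u' : List Bool, u' <+: u → u' ≠ u → ¬ seg h u' ⊆ Set.Ico a b}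

lemma bitVal_foldl (u : List Bool) (n : ℕ) :
    u.foldl (fun n b => 2 * n + (if b then 1 else 0)) n = n * 2 ^ u.length + bitVal u := by
  induction u generalizing n with
  | nil => simp [bitVal]
  | cons c u ih =>
    simp only [List.foldl_cons, List.length_cons, bitVal]
    rw [ih, ih (2 * 0 + if c then 1 else 0)]
    ring

lemma bitVal_append (u v : List Bool) :
    bitVal (u ++ v) = bitVal u * 2 ^ v.length + bitVal v := by
  rw [bitVal, List.foldl_append, bitVal_foldl]
  rfl

lemma bitVal_lt (u : List Bool) : bitVal u < 2 ^ u.length := by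
  induction u with
  | nil => simp [bitVal]
  | cons c u ih =>
    have : bitVal (c :: u) = (if c then 1 else 0) * 2 ^ u.length + bitVal u := by
      rw [show (c :: u) = [c] ++ u from rfl, bitVal_append]
      cases c <;> simp [bitVal]
    rw [this]
    have : (if c then 1 else 0) ≤ 1 := by cases c <;> simp
    simp only [List.length_cons, pow_succ]
    nlinarith

lemma bitVal_inj : ∀ {u v : List Bool}, u.length = v.length → bitVal u = bitVal v → u = v := by
  intro u
  induction u with
  | nil => intro v hl _; exact (List.eq_nil_of_length_eq_zero hl.symm).symm
  | cons c u ih =>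
    intro v hl hv
    cases v with
    | nil => simp at hl
    | cons d v =>
      simp only [List.length_cons, Nat.succ_inj] at hl
      have e1 : bitVal (c :: u) = (if c then 1 else 0) * 2 ^ u.length + bitVal u := by
        rw [show (c :: u) = [c] ++ u from rfl, bitVal_append]; cases c <;> simp [bitVal]
      have e2 : bitVal (d :: v) = (if d then 1 else 0) * 2 ^ v.length + bitVal v := by
        rw [show (d :: v) = [d] ++ v from rfl, bitVal_append]; cases d <;> simp [bitVal]
      rw [e1, e2, ← hl] at hv
      have b1 := bitVal_lt u
      have b2 := bitVal_lt v
      rw [← hl] at b2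
      have hcd : c = d ∧ bitVal u = bitVal v := by
        cases c <;> cases d <;> simp at hv ⊢ <;> omega
      rw [hcd.1, ih hl hcd.2]

lemma seg_bounds {h a b : ℕ} {u : List Bool} (hs : seg h u ⊆ Set.Ico a b) :
    a ≤ bitVal u * 2 ^ (h - u.length) ∧ (bitVal u + 1) * 2 ^ (h - u.length) ≤ b := by
  have hK : 0 < 2 ^ (h - u.length) := by positivity
  have he : (bitVal u + 1) * 2 ^ (h - u.length)
      = bitVal u * 2 ^ (h - u.length) + 2 ^ (h - u.length) := by ring
  have h1 := hs (show bitVal u * 2 ^ (h - u.length) ∈ seg h u from ⟨le_rfl, by omega⟩)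
  have h2 := hs (show (bitVal u + 1) * 2 ^ (h - u.length) - 1 ∈ seg h u from ⟨by omega, by omega⟩)
  obtain ⟨ha, -⟩ := h1
  obtain ⟨-, hb⟩ := h2
  exact ⟨ha, by omega⟩

lemma middle_false (h a b : ℕ)
    (u1 u2 u3 : List Bool) (h1 : u1 ∈ CP h a b) (h2 : u2 ∈ CP h a b) (h3 : u3 ∈ CP h a b)
    (hl1 : u1.length = u2.length) (hl3 : u3.length = u2.length)
    (hv12 : bitVal u1 < bitVal u2) (hv23 : bitVal u2 < bitVal u3) : False := by
  rcases u2.eq_nil_or_concat' with rfl | ⟨p, c, rfl⟩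
  · have : u1 = [] := List.eq_nil_of_length_eq_zero hl1
    subst this; omega
  obtain ⟨hlen2, hseg2, hmin2⟩ := h2
  obtain ⟨-, hseg1, -⟩ := h1
  obtain ⟨-, hseg3, -⟩ := h3
  have hplen : (p ++ [c]).length = p.length + 1 := by simp
  have hjh : p.length + 1 ≤ h := by omega
  have hexp1 : h - u1.length = h - (p ++ [c]).length := by rw [hl1]
  have hexp3 : h - u3.length = h - (p ++ [c]).length := by rw [hl3]
  have hexpp : h - p.length = (h - (p ++ [c]).length) + 1 := by omega
  have hbit : (if c then 1 else 0) ≤ 1 := by cases c <;> simp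
  have hn2eq : bitVal (p ++ [c]) = 2 * bitVal p + (if c then 1 else 0) := by
    rw [bitVal_append]
    have : bitVal [c] = (if c then 1 else 0) := by cases c <;> simp [bitVal]
    rw [this]; simp; ring
  have ha1 := (seg_bounds hseg1).1
  have hb3 := (seg_bounds hseg3).2
  rw [hexp1] at ha1
  rw [hexp3] at hb3
  have hpar : seg h p ⊆ Set.Ico a b := by
    intro m hm
    obtain ⟨hm1, hm2⟩ := hm
    rw [hexpp, pow_succ] at hm1 hm2
    generalize hKd : 2 ^ (h - (p ++ [c]).length) = K at *
    have hK : 0 < K := by rw [← hKd]; positivity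
    have hle1 : bitVal u1 ≤ 2 * bitVal p := by omega
    have hle2 : 2 * bitVal p + 2 ≤ bitVal u3 + 1 := by omega
    have t1 : bitVal u1 * K ≤ (2 * bitVal p) * K := Nat.mul_le_mul_right _ hle1
    have t2 : (2 * bitVal p + 2) * K ≤ (bitVal u3 + 1) * K := Nat.mul_le_mul_right _ hle2
    constructor
    · nlinarith
    · nlinarith
  exact hmin2 p (List.prefix_append p [c])
    (by intro e; have := congrArg List.length e; simp at this) hpar

/-- For `a < b ≤ 2^h`, each level `j ≤ h` of the segment tree
contains at most two bitstrings of `CP_h(a, b)`; consequently `CP_h(a, b)` is finite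
with cardinality at most `2 · (h + 1)`. -/
theorem canonical_partition_at_most_two_per_level
    (h a b : ℕ) (hab : a < b) (hb : b ≤ 2 ^ h) :
    (∀ j : ℕ, j ≤ h →
      ∀ u ∈ CP h a b, ∀ v ∈ CP h a b, ∀ w ∈ CP h a b,
        u.length = j → v.length = j → w.length = j → u = v ∨ u = w ∨ v = w) ∧
    (CP h a b).Finite ∧ (CP h a b).ncard ≤ 2 * (h + 1) := by
  have key : ∀ u ∈ CP h a b, ∀ v ∈ CP h a b, ∀ w ∈ CP h a b,
      u.length = v.length → w.length = v.length → u = v ∨ u = w ∨ v = w := by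
    intro u hu v hv w hw hluv hlwv
    by_contra hc
    push_neg at hc
    obtain ⟨huv, huw, hvw⟩ := hc
    have nuv : bitVal u ≠ bitVal v := fun e => huv (bitVal_inj hluv e)
    have nuw : bitVal u ≠ bitVal w := fun e => huw (bitVal_inj (hluv.trans hlwv.symm) e)
    have nvw : bitVal v ≠ bitVal w := fun e => hvw (bitVal_inj hlwv.symm e)
    rcases lt_trichotomy (bitVal u) (bitVal v) with h1 | h1 | h1
    · rcases lt_trichotomy (bitVal v) (bitVal w) with h2 | h2 | h2
      · exact middle_false h a b u v w hu hv hw hluv hlwv h1 h2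
      · exact nvw h2
      · rcases lt_trichotomy (bitVal u) (bitVal w) with h3 | h3 | h3
        · exact middle_false h a b u w v hu hw hv
            (hluv.trans hlwv.symm) hlwv.symm h3 h2
        · exact nuw h3
        · exact middle_false h a b w u v hw hu hv
            (hlwv.trans hluv.symm) hluv.symm h3 h1
    · exact nuv h1
    · rcases lt_trichotomy (bitVal u) (bitVal w) with h2 | h2 | h2
      · exact middle_false h a b v u w hv hu hw hluv.symm (hlwv.trans hluv.symm) h1 h2
      · exact nuw h2
      · rcases lt_trichotomy (bitVal v) (bitVal w) with h3 | h3 | h3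
        · exact middle_false h a b v w u hv hw hu
            hlwv.symm (hluv.trans hlwv.symm) h3 h2
        · exact nvw h3
        · exact middle_false h a b w v u hw hv hu hlwv hluv h3 h1
  have keyj : ∀ j : ℕ, j ≤ h →
      ∀ u ∈ CP h a b, ∀ v ∈ CP h a b, ∀ w ∈ CP h a b,
        u.length = j → v.length = j → w.length = j → u = v ∨ u = w ∨ v = w := by
    intro j _ u hu v hv w hw hlu hlv hlw
    exact key u hu v hv w hw (hlu.trans hlv.symm) (hlw.trans hlv.symm)
  have hfin : (CP h a b).Finite :=
    (List.finite_length_le Bool h).subset (fun u hu => hu.1)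
  refine ⟨keyj, hfin, ?_⟩
  classical
  rw [Set.ncard_eq_toFinset_card _ hfin]
  set s := hfin.toFinset with hs
  have hmaps : ∀ u ∈ s, u.length ∈ Finset.range (h + 1) := by
    intro u hu
    rw [hs, Set.Finite.mem_toFinset] at hu
    simp [Nat.lt_succ_iff, hu.1]
  have hfib : ∀ j ∈ Finset.range (h + 1), (s.filter fun u => u.length = j).card ≤ 2 := by
    intro j _
    by_contra hgt
    push_neg at hgt
    obtain ⟨x, y, z, hx, hy, hz, hxy, hxz, hyz⟩ := Finset.two_lt_card_iff.mp hgt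
    simp only [Finset.mem_filter, hs, Set.Finite.mem_toFinset] at hx hy hz
    rcases key x hx.1 y hy.1 z hz.1 (hx.2.trans hy.2.symm) (hz.2.trans hy.2.symm) with e | e | e
    · exact hxy e
    · exact hxz e
    · exact hyz e
  calc s.card ≤ 2 * (Finset.range (h + 1)).card :=
        Finset.card_le_mul_card_image_of_maps_to hmaps 2 hfib
    _ = 2 * (h + 1) := by rw [Finset.card_range]
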